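/- arXiv:1507.00492 — 5 statements merged into one kernel-verified Lean document; each statement's English description precedes it below -/
import Mathlib

section
/- Let A be a positive N×N matrix (all entries strictly positive), u a positive vector, and λ a real number such that Au ≤ λu componentwise and Au ≠ λu. Then the spectral radius of A is strictly less than λ. -/
/-!
Since `A` is positive, applying it to `A u ≤ λ u`, `A u ≠ λ u` gives the strict inequality
`A v < λ v` in every entry for the positive vector `v = A u`; by finiteness `A v ≤ c v` for some
`c < λ`. A Collatz–Wielandt comparison then bounds every eigenvalue: if `A x = μ x` with `x ≠ 0`,
then `|μ| |x| ≤ A |x|` entrywise, and at an index where `|x|` touches its smallest dominating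
multiple `t v` this gives `|μ| t v_i ≤ t (A v)_i ≤ c t v_i`.
-/

open Matrix

/-- Spectral radius of a real square matrix: the maximum modulus of its
(complex) eigenvalues, i.e. of the roots of the characteristic polynomial of
its complexification. -/
noncomputable def specRad {N : ℕ} (A : Matrix (Fin N) (Fin N) ℝ) : ℝ :=
  sSup {r : ℝ | ∃ μ : ℂ, (A.map Complex.ofReal).charpoly.IsRoot μ ∧ r = ‖μ‖}

namespace Matrix

variable {n : Type*} [Fintype n]

theorem exists_mulVec_eq_smul_of_isRoot_charpoly {K : Type*} [Field K] [DecidableEq n]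
    {B : Matrix n n K} {μ : K} (h : B.charpoly.IsRoot μ) : ∃ x ≠ 0, B *ᵥ x = μ • x := by
  rw [← charpoly_toLin', ← Module.End.hasEigenvalue_iff_isRoot_charpoly] at h
  obtain ⟨x, hx⟩ := h.exists_hasEigenvector
  exact ⟨x, hx.2, by simpa using hx.apply_eq_smul⟩

section Ordered

variable {R : Type*} [Field R] [LinearOrder R] [IsStrictOrderedRing R] {A : Matrix n n R}

theorem mulVec_le_mulVec_of_nonneg (hA : ∀ i j, 0 ≤ A i j) {x y : n → R} (h : x ≤ y) :
    A *ᵥ x ≤ A *ᵥ y := fun i =>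
  Finset.sum_le_sum fun j _ => mul_le_mul_of_nonneg_left (h j) (hA i j)

theorem mulVec_lt_mulVec_of_pos (hA : ∀ i j, 0 < A i j) {x y : n → R} (h : x ≤ y) (hne : x ≠ y)
    (i : n) : (A *ᵥ x) i < (A *ᵥ y) i := by
  obtain ⟨-, j, hj⟩ := Pi.lt_def.1 (lt_of_le_of_ne h hne)
  exact Finset.sum_lt_sum (fun k _ => mul_le_mul_of_nonneg_left (h k) (hA i k).le)
    ⟨j, Finset.mem_univ j, mul_lt_mul_of_pos_left hj (hA i j)⟩

theorem le_of_smul_le_mulVec_of_mulVec_le_smul (hA : ∀ i j, 0 ≤ A i j) {w v : n → R} {r c : R}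
    (hw : 0 ≤ w) (hw0 : w ≠ 0) (hrw : r • w ≤ A *ᵥ w) (hv : ∀ i, 0 < v i)
    (hAv : A *ᵥ v ≤ c • v) : r ≤ c := by
  obtain ⟨j, hj⟩ := Function.ne_iff.1 hw0
  have : Nonempty n := ⟨j⟩
  obtain ⟨i, hi⟩ := Finite.exists_max fun k => w k / v k
  set t := w i / v i
  have hwt : w ≤ t • v := fun k => (div_le_iff₀ (hv k)).1 (hi k)
  have hwi : w i = t * v i := (div_mul_cancel₀ _ (hv i).ne').symm
  have ht : 0 < t := (div_pos ((hw j).lt_of_ne' hj) (hv j)).trans_le (hi j)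
  have key : r * (t * v i) ≤ c * (t * v i) :=
    calc r * (t * v i) = (r • w) i := by rw [Pi.smul_apply, smul_eq_mul, hwi]
      _ ≤ (A *ᵥ w) i := hrw i
      _ ≤ (A *ᵥ (t • v)) i := mulVec_le_mulVec_of_nonneg hA hwt i
      _ = t * (A *ᵥ v) i := by rw [mulVec_smul, Pi.smul_apply, smul_eq_mul]
      _ ≤ t * (c * v i) := mul_le_mul_of_nonneg_left (hAv i) ht.le
      _ = c * (t * v i) := by ring
  exact le_of_mul_le_mul_right key (mul_pos ht (hv i))

theorem exists_lt_mulVec_le_smul {v : n → R} {lam : R} (hv : ∀ i, 0 < v i)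
    (h : ∀ i, (A *ᵥ v) i < lam * v i) : ∃ c < lam, A *ᵥ v ≤ c • v := by
  rcases isEmpty_or_nonempty n with hn | hn
  · obtain ⟨c, hc⟩ := exists_lt lam
    exact ⟨c, hc, fun i => isEmptyElim i⟩
  · obtain ⟨i, hi⟩ := Finite.exists_max fun k => (A *ᵥ v) k / v k
    exact ⟨_, (div_lt_iff₀ (hv i)).2 (h i), fun k => (div_le_iff₀ (hv k)).1 (hi k)⟩

end Ordered

theorem norm_map_ofReal_mulVec_le {A : Matrix n n ℝ} (hA : ∀ i j, 0 ≤ A i j) (x : n → ℂ) (i : n) :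
    ‖(A.map Complex.ofReal *ᵥ x) i‖ ≤ (A *ᵥ fun j => ‖x j‖) i :=
  (norm_sum_le _ _).trans_eq <| Finset.sum_congr rfl fun j _ => by
    simp only [map_apply, norm_mul, Complex.norm_real, Real.norm_of_nonneg (hA i j)]

theorem norm_le_of_isRoot_charpoly_map_ofReal [DecidableEq n] {A : Matrix n n ℝ}
    (hA : ∀ i j, 0 ≤ A i j) {v : n → ℝ} {c : ℝ} (hv : ∀ i, 0 < v i) (hAv : A *ᵥ v ≤ c • v)
    {μ : ℂ} (hμ : (A.map Complex.ofReal).charpoly.IsRoot μ) : ‖μ‖ ≤ c := by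
  obtain ⟨x, hx0, hx⟩ := exists_mulVec_eq_smul_of_isRoot_charpoly hμ
  refine le_of_smul_le_mulVec_of_mulVec_le_smul hA (w := fun j => ‖x j‖) (fun j => norm_nonneg _)
    (fun h => hx0 (funext fun j => norm_eq_zero.1 (congrFun h j))) (fun i => ?_) hv hAv
  simpa [hx, norm_mul] using norm_map_ofReal_mulVec_le hA x i

end Matrix

theorem specRad_le_of_forall_norm_le {N : ℕ} (hN : 0 < N) {A : Matrix (Fin N) (Fin N) ℝ} {c : ℝ}
    (h : ∀ μ : ℂ, (A.map Complex.ofReal).charpoly.IsRoot μ → ‖μ‖ ≤ c) : specRad A ≤ c := by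
  have hdeg : 0 < (A.map Complex.ofReal).charpoly.degree := by
    rw [charpoly_degree_eq_dim, Fintype.card_fin]; exact_mod_cast hN
  obtain ⟨μ, hμ⟩ := Complex.exists_root hdeg
  exact csSup_le ⟨_, μ, hμ, rfl⟩ (by rintro _ ⟨μ, hμ, rfl⟩; exact h μ hμ)

theorem stmt_0 {N : ℕ} (A : Matrix (Fin N) (Fin N) ℝ) (u : Fin N → ℝ) (lam : ℝ)
    (hA : ∀ i j, 0 < A i j) (hu : ∀ i, 0 < u i)
    (hle : A.mulVec u ≤ lam • u) (hne : A.mulVec u ≠ lam • u) :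
    specRad A < lam := by
  have hN : 0 < N := Nat.pos_of_ne_zero <| by rintro rfl; exact hne (Subsingleton.elim _ _)
  set v := A *ᵥ u
  have hv : ∀ i, 0 < v i := by
    have hu0 : 0 ≠ u := fun h => (hu ⟨0, hN⟩).ne (congrFun h _)
    simpa using mulVec_lt_mulVec_of_pos hA (show 0 ≤ u from fun i => (hu i).le) hu0
  have hAv : ∀ i, (A *ᵥ v) i < lam * v i := by
    simpa [mulVec_smul] using mulVec_lt_mulVec_of_pos hA hle hne
  obtain ⟨c, hc, hcv⟩ := exists_lt_mulVec_le_smul hv hAv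
  exact (specRad_le_of_forall_norm_le hN fun μ hμ =>
    norm_le_of_isRoot_charpoly_map_ofReal (fun i j => (hA i j).le) hv hcv hμ).trans_lt hc
end

section
/- Let 𝒜 ⊂ M(N,M) be an IRU-set of matrices (every matrix obtained by independently choosing each row i from a given set of rows 𝒜_i), and suppose Ãu = v for some matrix à ∈ 𝒜 and vectors u, v. Then either Au ≥ v componentwise for all A ∈ 𝒜, or there exists Ā ∈ 𝒜 with Āu ≤ v and Āu ≠ v. -/
open Matrix

/-- An independent row uncertainty (IRU) set of matrices: the set of all
matrices whose `i`-th row belongs to a prescribed set of rows `rows i`. -/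
def IsIRU {N M : ℕ} (S : Set (Matrix (Fin N) (Fin M) ℝ)) : Prop :=
  ∃ rows : Fin N → Set (Fin M → ℝ), S = {A | ∀ i, A i ∈ rows i}

/-! If some `A ∈ 𝒜` has `(A u) i < v i`, put the `i`-th row of `A` into `Ã`: the resulting matrix
is still in `𝒜`, and its product with `u` is `v` with the `i`-th entry lowered. -/

theorem IsIRU.updateRow_mem {N M : ℕ} {S : Set (Matrix (Fin N) (Fin M) ℝ)} (hS : IsIRU S)
    {A B : Matrix (Fin N) (Fin M) ℝ} (hA : A ∈ S) (hB : B ∈ S) (i : Fin N) :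
    A.updateRow i (B i) ∈ S := by
  obtain ⟨rows, rfl⟩ := hS
  intro j
  obtain rfl | hji := eq_or_ne j i
  · simpa using hB j
  · simpa [updateRow_ne hji] using hA j

theorem stmt_4 {N M : ℕ} (S : Set (Matrix (Fin N) (Fin M) ℝ)) (hS : IsIRU S)
    (A₀ : Matrix (Fin N) (Fin M) ℝ) (hA₀ : A₀ ∈ S)
    (u : Fin M → ℝ) (v : Fin N → ℝ) (h : A₀.mulVec u = v) :
    (∀ A ∈ S, v ≤ A.mulVec u) ∨ ∃ B ∈ S, B.mulVec u ≤ v ∧ B.mulVec u ≠ v := by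
  refine or_iff_not_imp_left.2 fun hnot => ?_
  obtain ⟨A, hA, hAv⟩ := not_forall₂.1 hnot
  simp only [Pi.le_def, not_forall, not_le] at hAv
  obtain ⟨i, hi⟩ := hAv
  refine ⟨A₀.updateRow i (A i), hS.updateRow_mem hA₀ hA i, ?_⟩
  rw [updateRow_mulVec, h, ← lt_iff_le_and_ne]
  exact update_lt_self_iff.2 hi
end

section
/- Let 𝒜 ⊂ M(N,M) be an IRU-set of matrices, and suppose Ãu = v for some à ∈ 𝒜 and vectors u, v. Then either Au ≤ v componentwise for all A ∈ 𝒜, or there exists Ā ∈ 𝒜 with Āu ≥ v and Āu ≠ v. -/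
open Matrix

theorem stmt_5 {N M : ℕ} (S : Set (Matrix (Fin N) (Fin M) ℝ)) (hS : IsIRU S)
    (A₀ : Matrix (Fin N) (Fin M) ℝ) (hA₀ : A₀ ∈ S)
    (u : Fin M → ℝ) (v : Fin N → ℝ) (h : A₀.mulVec u = v) :
    (∀ A ∈ S, A.mulVec u ≤ v) ∨ ∃ B ∈ S, v ≤ B.mulVec u ∧ B.mulVec u ≠ v := by
  refine or_iff_not_imp_left.2 fun hnot => ?_
  push Not at hnot
  obtain ⟨A, hA, hAu⟩ := hnot
  obtain ⟨i, hi⟩ : ∃ i, v i < (A *ᵥ u) i := by simpa [Pi.le_def] using hAu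
  have hlt : v < A₀.updateRow i (A i) *ᵥ u := by
    rw [updateRow_mulVec, h]
    exact lt_update_self_iff.2 hi
  exact ⟨_, hS.updateRow_mem hA₀ hA i, hlt.le, hlt.ne'⟩
end

section
/- Let 𝒜 be a compact IRU-set of strictly positive N×N matrices. Then for every n ≥ 1 and every choice of matrices A_1, …, A_n ∈ 𝒜, one has ρ(A_n ⋯ A_1) ≥ (min_{A∈𝒜} ρ(A))^n. -/
/-!
For the row sets of a compact IRU set `S` of positive matrices, the row-wise minimum map
`v ↦ min_{A ∈ S} A v` is positively homogeneous and strictly monotone, so Perron's maximisation of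
the Collatz–Wielandt quotient yields a positive `v` with `min_{A ∈ S} A v = λ v`. Rows being
independent, the minimum is attained by a single `B ∈ S`, whence `ρ(B) = λ ≥ min_S ρ`. Every
`A ∈ S` satisfies `A v ≥ λ v`, so `A_n ⋯ A_1 v ≥ λ^n v`, and comparing `v` with the Perron vector
of the positive product gives `ρ(A_n ⋯ A_1) ≥ λ^n`.
-/

open Matrix

open Finset
open scoped Pointwise

theorem Matrix.isRoot_charpoly_iff_exists_mulVec_eq_smul {K n : Type*} [Field K] [Fintype n]
    [DecidableEq n] (M : Matrix n n K) (μ : K) :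
    M.charpoly.IsRoot μ ↔ ∃ z, z ≠ 0 ∧ M *ᵥ z = μ • z := by
  rw [← mem_spectrum_iff_isRoot_charpoly, ← spectrum_toLin',
    ← Module.End.hasEigenvalue_iff_mem_spectrum, Module.End.hasEigenvalue_iff]
  simp [Submodule.ne_bot_iff, and_comm]

section Nonneg

variable {ι : Type*} [Fintype ι] {M : Matrix ι ι ℝ}

theorem Matrix.mulVec_le_mulVec_of_nonneg_s8 (hM : ∀ i j, 0 ≤ M i j) {x y : ι → ℝ} (hxy : x ≤ y) :
    M *ᵥ x ≤ M *ᵥ y := fun i =>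
  dotProduct_le_dotProduct_of_nonneg_left hxy (hM i)

theorem le_of_smul_le_mulVec_of_mulVec_le_smul (hM : ∀ i j, 0 ≤ M i j) {u x : ι → ℝ} {c μ : ℝ}
    (hu : ∀ i, 0 < u i) (hMu : M *ᵥ u ≤ μ • u) (hx : 0 ≤ x) (hx0 : x ≠ 0)
    (hMx : c • x ≤ M *ᵥ x) : c ≤ μ := by
  obtain ⟨j, hj⟩ := Function.ne_iff.1 hx0
  have : Nonempty ι := ⟨j⟩
  obtain ⟨i, hi⟩ := Finite.exists_max fun k => x k / u k
  set t := x i / u i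
  have hxt : x ≤ t • u := fun k => (div_le_iff₀ (hu k)).1 (hi k)
  have hxi : x i = t * u i := (div_mul_cancel₀ _ (hu i).ne').symm
  have ht : 0 < t := (div_pos ((hx j).lt_of_ne' hj) (hu j)).trans_le (hi j)
  have hxi_pos : 0 < x i := hxi ▸ mul_pos ht (hu i)
  refine le_of_mul_le_mul_right ?_ hxi_pos
  calc c * x i ≤ (M *ᵥ x) i := hMx i
    _ ≤ (M *ᵥ (t • u)) i := mulVec_le_mulVec_of_nonneg_s8 hM hxt i
    _ = t * (M *ᵥ u) i := by rw [mulVec_smul, Pi.smul_apply, smul_eq_mul]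
    _ ≤ t * (μ * u i) := mul_le_mul_of_nonneg_left (hMu i) ht.le
    _ = μ * x i := by rw [hxi]; ring

end Nonneg

theorem specRad_nonneg {N : ℕ} (A : Matrix (Fin N) (Fin N) ℝ) : 0 ≤ specRad A :=
  Real.sSup_nonneg (by rintro _ ⟨μ, -, rfl⟩; exact norm_nonneg μ)

theorem specRad_fin_zero (A : Matrix (Fin 0) (Fin 0) ℝ) : specRad A = 0 := by
  simp [specRad, charpoly_isEmpty]

theorem specRad_eq_of_mulVec_eq_smul {n : ℕ} [NeZero n] {M : Matrix (Fin n) (Fin n) ℝ}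
    (hM : ∀ i j, 0 ≤ M i j) {u : Fin n → ℝ} {μ : ℝ} (hu : ∀ i, 0 < u i)
    (hMu : M *ᵥ u = μ • u) : specRad M = μ := by
  have hμ : 0 ≤ μ := by
    have h0 : 0 ≤ (M *ᵥ u) 0 := dotProduct_nonneg_of_nonneg (hM 0) fun j => (hu j).le
    rw [hMu, Pi.smul_apply, smul_eq_mul] at h0
    exact nonneg_of_mul_nonneg_left h0 (hu 0)
  refine IsGreatest.csSup_eq ⟨⟨μ, ?_, by simp [abs_of_nonneg hμ]⟩, ?_⟩
  · have hroot : M.charpoly.IsRoot μ :=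
      (isRoot_charpoly_iff_exists_mulVec_eq_smul M μ).2
        ⟨u, fun h => (hu 0).ne' (congrFun h 0), hMu⟩
    rw [show M.map Complex.ofReal = M.map Complex.ofRealHom from rfl, charpoly_map]
    exact hroot.map
  · rintro r ⟨ν, hν, rfl⟩
    obtain ⟨z, hz, hMz⟩ := (isRoot_charpoly_iff_exists_mulVec_eq_smul _ ν).1 hν
    refine le_of_smul_le_mulVec_of_mulVec_le_smul hM hu hMu.le (fun i => norm_nonneg (z i))
      (fun h => hz (funext fun i => norm_eq_zero.1 (congrFun h i))) fun i => ?_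
    calc ‖ν‖ * ‖z i‖ = ‖∑ j, (M i j : ℂ) * z j‖ := by
          rw [← norm_mul, ← smul_eq_mul, ← Pi.smul_apply, ← hMz]; rfl
      _ ≤ ∑ j, M i j * ‖z j‖ := by
          refine (norm_sum_le _ _).trans_eq (sum_congr rfl fun j _ => ?_)
          rw [norm_mul, Complex.norm_real, Real.norm_of_nonneg (hM i j)]

section RowMin

variable {ι : Type*} [Fintype ι] {R : ι → Set (ι → ℝ)}

/-- For the row sets `R i` of an IRU set `S`, `rowMin R v` is the entrywise minimum of `A *ᵥ v`
over `A ∈ S`. -/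
noncomputable def rowMin (R : ι → Set (ι → ℝ)) (v : ι → ℝ) (i : ι) : ℝ :=
  sInf ((· ⬝ᵥ v) '' R i)

theorem rowMin_le {i : ι} (hR : IsCompact (R i)) {a : ι → ℝ} (ha : a ∈ R i) (v : ι → ℝ) :
    rowMin R v i ≤ a ⬝ᵥ v :=
  csInf_le (hR.image (continuous_id.dotProduct continuous_const)).bddBelow ⟨a, ha, rfl⟩

theorem exists_dotProduct_eq_rowMin {i : ι} (hR : IsCompact (R i)) (hne : (R i).Nonempty)
    (v : ι → ℝ) : ∃ a ∈ R i, a ⬝ᵥ v = rowMin R v i :=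
  (hR.image (continuous_id.dotProduct continuous_const)).sInf_mem (hne.image _)

theorem rowMin_smul {c : ℝ} (hc : 0 ≤ c) (v : ι → ℝ) : rowMin R (c • v) = c • rowMin R v := by
  ext i
  have : (· ⬝ᵥ c • v) '' R i = c • (· ⬝ᵥ v) '' R i := by
    simp only [dotProduct_smul, ← Set.image_smul, Set.image_image]
  rw [rowMin, this, Real.sInf_smul_of_nonneg hc]
  rfl

theorem rowMin_zero (hne : ∀ i, (R i).Nonempty) : rowMin R 0 = 0 := by
  ext i
  simp only [rowMin, dotProduct_zero, (hne i).image_const, csInf_singleton, Pi.zero_apply]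

theorem rowMin_lt_rowMin {i : ι} (hR : IsCompact (R i)) (hne : (R i).Nonempty)
    (hpos : ∀ a ∈ R i, ∀ j, 0 < a j) {x y : ι → ℝ} (hxy : x ≤ y) (hxy' : x ≠ y) :
    rowMin R x i < rowMin R y i := by
  obtain ⟨a, ha, hay⟩ := exists_dotProduct_eq_rowMin hR hne y
  obtain ⟨j, hj⟩ := Function.ne_iff.1 hxy'
  refine (rowMin_le hR ha x).trans_lt (hay ▸ ?_)
  exact sum_lt_sum (fun k _ => mul_le_mul_of_nonneg_left (hxy k) (hpos a ha k).le)
    ⟨j, mem_univ j, mul_lt_mul_of_pos_left ((hxy j).lt_of_ne hj) (hpos a ha j)⟩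

theorem rowMin_pos (hR : ∀ i, IsCompact (R i)) (hne : ∀ i, (R i).Nonempty)
    (hpos : ∀ i, ∀ a ∈ R i, ∀ j, 0 < a j) {x : ι → ℝ} (hx : 0 ≤ x) (hx0 : x ≠ 0) (i : ι) :
    0 < rowMin R x i := by
  simpa [rowMin_zero hne] using rowMin_lt_rowMin (hR i) (hne i) (hpos i) hx hx0.symm

theorem continuous_rowMin {i : ι} (hR : IsCompact (R i)) : Continuous fun v => rowMin R v i :=
  hR.continuous_sInf (by fun_prop)

end RowMin

section Perron

variable {ι : Type*} [Fintype ι] [Nonempty ι] {R : ι → Set (ι → ℝ)}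

/-- A maximiser on `K` of the Collatz–Wielandt quotient `min_i (rowMin R w)_i / w_i` is an
eigenvector: otherwise strict monotonicity of `rowMin R` makes the rescaled `rowMin R w` a better
point. -/
theorem exists_rowMin_eq_smul_of_isCompact (hR : ∀ i, IsCompact (R i))
    (hne : ∀ i, (R i).Nonempty) (hpos : ∀ i, ∀ a ∈ R i, ∀ j, 0 < a j) {K : Set (ι → ℝ)}
    (hK : IsCompact K) (hKne : K.Nonempty) (hKpos : ∀ w ∈ K, ∀ i, 0 < w i)
    (hKmaps : ∀ w ∈ K, ∃ c : ℝ, 0 < c ∧ c • rowMin R w ∈ K) :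
    ∃ v : ι → ℝ, (∀ i, 0 < v i) ∧ ∃ r : ℝ, rowMin R v = r • v := by
  set g : (ι → ℝ) → ℝ := fun w => univ.inf' univ_nonempty fun i => rowMin R w i / w i
  have hg : ContinuousOn g K := fun w hw => ContinuousAt.continuousWithinAt <|
    ContinuousAt.finset_inf'_apply _ fun i _ => ((continuous_rowMin (hR i)).continuousAt).div
      (continuous_apply i).continuousAt (hKpos w hw i).ne'
  obtain ⟨w, hwK, hmax⟩ := hK.exists_isMaxOn hKne hg
  have hw := hKpos w hwK
  refine ⟨w, hw, g w, ?_⟩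
  have hTw : ∀ i, 0 < rowMin R w i :=
    rowMin_pos hR hne hpos (fun i => (hw i).le) fun h => by
      simpa [h] using hw (Classical.arbitrary ι)
  have hgw : 0 ≤ g w := ((lt_inf'_iff _).2 fun i _ => div_pos (hTw i) (hw i)).le
  have hle : g w • w ≤ rowMin R w := fun i => (le_div_iff₀ (hw i)).1 (inf'_le _ (mem_univ i))
  by_contra hneq
  obtain ⟨c, hc, hcK⟩ := hKmaps w hwK
  refine (show g _ ≤ g w from hmax hcK).not_gt ((lt_inf'_iff _).2 fun i _ => ?_)
  have hlt := rowMin_lt_rowMin (hR i) (hne i) (hpos i) hle (Ne.symm hneq)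
  rw [rowMin_smul hgw, Pi.smul_apply, smul_eq_mul, ← lt_div_iff₀ (hTw i)] at hlt
  simpa only [rowMin_smul hc.le, Pi.smul_apply, smul_eq_mul, mul_div_mul_left _ _ hc.ne'] using hlt

theorem exists_pos_rowMin_eq_smul (hR : ∀ i, IsCompact (R i)) (hne : ∀ i, (R i).Nonempty)
    (hpos : ∀ i, ∀ a ∈ R i, ∀ j, 0 < a j) :
    ∃ v : ι → ℝ, (∀ i, 0 < v i) ∧ ∃ r : ℝ, rowMin R v = r • v := by
  classical
  have hT : ∀ x ∈ stdSimplex ℝ ι, ∀ i, 0 < rowMin R x i := fun x hx =>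
    rowMin_pos hR hne hpos hx.1 fun h => by simpa [h] using hx.2
  have hsum : ∀ x ∈ stdSimplex ℝ ι, 0 < ∑ i, rowMin R x i := fun x hx =>
    sum_pos (fun i _ => hT x hx i) univ_nonempty
  set F : (ι → ℝ) → ι → ℝ := fun x => (∑ i, rowMin R x i)⁻¹ • rowMin R x
  have hF : ∀ x ∈ stdSimplex ℝ ι, F x ∈ stdSimplex ℝ ι ∧ ∀ i, 0 < F x i := fun x hx =>
    ⟨⟨fun i => (mul_pos (inv_pos.2 (hsum x hx)) (hT x hx i)).le,
      by simp only [F, Pi.smul_apply, smul_eq_mul, ← mul_sum, inv_mul_cancel₀ (hsum x hx).ne']⟩,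
     fun i => mul_pos (inv_pos.2 (hsum x hx)) (hT x hx i)⟩
  have hFc : ContinuousOn F (stdSimplex ℝ ι) :=
    ((continuousOn_finsetSum _ fun i _ => (continuous_rowMin (hR i)).continuousOn).inv₀
      fun x hx => (hsum x hx).ne').smul
        (continuous_pi fun i => continuous_rowMin (hR i)).continuousOn
  refine exists_rowMin_eq_smul_of_isCompact hR hne hpos
    ((isCompact_stdSimplex ℝ ι).image_of_continuousOn hFc)
    ⟨_, _, single_mem_stdSimplex ℝ (Classical.arbitrary ι), rfl⟩ ?_ ?_
  · rintro _ ⟨x, hx, rfl⟩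
    exact (hF x hx).2
  · rintro _ ⟨x, hx, rfl⟩
    exact ⟨_, inv_pos.2 (hsum _ (hF x hx).1), F x, (hF x hx).1, rfl⟩

end Perron

theorem Matrix.exists_pos_mulVec_eq_smul {ι : Type*} [Fintype ι] [Nonempty ι] {P : Matrix ι ι ℝ}
    (hP : ∀ i j, 0 < P i j) : ∃ u : ι → ℝ, (∀ i, 0 < u i) ∧ ∃ μ : ℝ, P *ᵥ u = μ • u := by
  have hrow : ∀ v, rowMin (fun i => {P i}) v = P *ᵥ v := by
    intro v; ext i
    simp only [rowMin, Set.image_singleton, csInf_singleton]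
    rfl
  obtain ⟨u, hu, μ, hμ⟩ := exists_pos_rowMin_eq_smul (R := fun i => {P i})
    (fun i => isCompact_singleton) (fun i => Set.singleton_nonempty _)
    (by rintro i _ rfl; exact hP i)
  exact ⟨u, hu, μ, (hrow u).symm.trans hμ⟩

theorem Matrix.list_prod_pos {ι : Type*} [Fintype ι] [DecidableEq ι] [Nonempty ι]
    {L : List (Matrix ι ι ℝ)} (hL : L ≠ []) (hpos : ∀ A ∈ L, ∀ i j, 0 < A i j) :
    ∀ i j, 0 < L.prod i j := by
  induction L with
  | nil => exact absurd rfl hL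
  | cons A L ih =>
    intro i j
    rcases eq_or_ne L [] with rfl | hL'
    · simpa using hpos A (by simp) i j
    rw [List.prod_cons, mul_apply]
    exact sum_pos (fun k _ => mul_pos (hpos A (by simp) i k)
      (ih hL' (fun B hB => hpos B (List.mem_cons_of_mem _ hB)) k j)) univ_nonempty

theorem Matrix.pow_length_smul_le_list_prod_mulVec {ι : Type*} [Fintype ι] [DecidableEq ι]
    {L : List (Matrix ι ι ℝ)} {r : ℝ} (hr : 0 ≤ r) {v : ι → ℝ}
    (hL : ∀ A ∈ L, (∀ i j, 0 ≤ A i j) ∧ r • v ≤ A *ᵥ v) : r ^ L.length • v ≤ L.prod *ᵥ v := by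
  induction L with
  | nil => simp
  | cons A L ih =>
    obtain ⟨hA, hAv⟩ := hL A (by simp)
    calc r ^ (A :: L).length • v = r ^ L.length • (r • v) := by
          rw [List.length_cons, pow_succ, mul_smul]
      _ ≤ r ^ L.length • (A *ᵥ v) := smul_le_smul_of_nonneg_left hAv (pow_nonneg hr _)
      _ = A *ᵥ (r ^ L.length • v) := (mulVec_smul _ _ _).symm
      _ ≤ A *ᵥ (L.prod *ᵥ v) :=
          mulVec_le_mulVec_of_nonneg_s8 hA (ih fun B hB => hL B (List.mem_cons_of_mem _ hB))
      _ = (A :: L).prod *ᵥ v := by rw [List.prod_cons, mulVec_mulVec]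

theorem IsIRU.mem_of_forall_row_mem {N M : ℕ} {S : Set (Matrix (Fin N) (Fin M) ℝ)} (hS : IsIRU S)
    {B : Matrix (Fin N) (Fin M) ℝ} (hB : ∀ i, ∃ A ∈ S, A i = B i) : B ∈ S := by
  obtain ⟨rows, rfl⟩ := hS
  intro i
  obtain ⟨A, hA, hAB⟩ := hB i
  exact hAB ▸ hA i

/-- Each row of `B` minimises its product with a positive eigenvector of `rowMin`; row
independence puts `B` in `S`. -/
theorem IsIRU.exists_mulVec_eq_smul_forall_smul_le {N : ℕ} [NeZero N]
    {S : Set (Matrix (Fin N) (Fin N) ℝ)} (hS : IsIRU S) (hcomp : IsCompact S) (hne : S.Nonempty)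
    (hpos : ∀ A ∈ S, ∀ i j, 0 < A i j) :
    ∃ v : Fin N → ℝ, (∀ i, 0 < v i) ∧ ∃ r : ℝ, ∃ B ∈ S, B *ᵥ v = r • v ∧
      ∀ A ∈ S, r • v ≤ A *ᵥ v := by
  set R : Fin N → Set (Fin N → ℝ) := fun i => (fun A : Matrix (Fin N) (Fin N) ℝ => A i) '' S
  have hR : ∀ i, IsCompact (R i) := fun i => hcomp.image (continuous_apply i)
  have hRne : ∀ i, (R i).Nonempty := fun i => hne.image _
  obtain ⟨v, hv, r, hvr⟩ := exists_pos_rowMin_eq_smul hR hRne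
    (by rintro i _ ⟨A, hA, rfl⟩; exact hpos A hA i)
  choose a haR ha using fun i => exists_dotProduct_eq_rowMin (hR i) (hRne i) v
  refine ⟨v, hv, r, of a, hS.mem_of_forall_row_mem haR, funext fun i => ?_, ?_⟩
  · exact (ha i).trans (congrFun hvr i)
  · intro A hA i
    exact (congrFun hvr i).symm.trans_le (rowMin_le (hR i) ⟨A, hA, rfl⟩ v)

theorem stmt_8_general {N : ℕ} (S : Set (Matrix (Fin N) (Fin N) ℝ)) (hS : IsIRU S)
    (hcomp : IsCompact S) (hpos : ∀ A ∈ S, ∀ i j, 0 < A i j)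
    (n : ℕ) (hn : 1 ≤ n) (A : Fin n → Matrix (Fin N) (Fin N) ℝ)
    (hA : ∀ i, A i ∈ S) :
    sInf (specRad '' S) ^ n ≤ specRad ((List.ofFn A).reverse.prod) := by
  have hne : S.Nonempty := ⟨A ⟨0, hn⟩, hA _⟩
  rcases N.eq_zero_or_pos with rfl | hN
  · rw [show (specRad : Matrix (Fin 0) (Fin 0) ℝ → ℝ) = fun _ => 0 from funext specRad_fin_zero,
      hne.image_const, csInf_singleton, zero_pow (by omega)]
  have : NeZero N := ⟨hN.ne'⟩
  set P := (List.ofFn A).reverse.prod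
  have hLS : ∀ M ∈ (List.ofFn A).reverse, M ∈ S := by simpa using hA
  obtain ⟨v, hv, r, B, hBS, hBv, hSv⟩ := hS.exists_mulVec_eq_smul_forall_smul_le hcomp hne hpos
  have hB : specRad B = r := specRad_eq_of_mulVec_eq_smul (fun i j => (hpos B hBS i j).le) hv hBv
  have hP : ∀ i j, 0 < P i j :=
    list_prod_pos (by simp; omega) fun M hM => hpos M (hLS M hM)
  obtain ⟨u, hu, μ, hPu⟩ := exists_pos_mulVec_eq_smul hP
  have hPv : r ^ n • v ≤ P *ᵥ v := by
    simpa using pow_length_smul_le_list_prod_mulVec (hB ▸ specRad_nonneg B)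
      fun M hM => ⟨fun i j => (hpos M (hLS M hM) i j).le, hSv M (hLS M hM)⟩
  calc sInf (specRad '' S) ^ n ≤ r ^ n :=
        pow_le_pow_left₀ (Real.sInf_nonneg (by rintro _ ⟨M, -, rfl⟩; exact specRad_nonneg M))
          (hB ▸ csInf_le ⟨0, by rintro _ ⟨M, -, rfl⟩; exact specRad_nonneg M⟩ ⟨B, hBS, rfl⟩) n
    _ ≤ μ := le_of_smul_le_mulVec_of_mulVec_le_smul (fun i j => (hP i j).le) hu hPu.le
        (fun i => (hv i).le) (fun h => by simpa [h] using hv 0) hPv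
    _ = specRad P := (specRad_eq_of_mulVec_eq_smul (fun i j => (hP i j).le) hu hPu).symm

theorem stmt_8 {N : ℕ} (S : Set (Matrix (Fin N) (Fin N) ℝ)) (hS : IsIRU S)
    (hcomp : IsCompact S) (hne : S.Nonempty) (hpos : ∀ A ∈ S, ∀ i j, 0 < A i j)
    (n : ℕ) (hn : 1 ≤ n) (A : Fin n → Matrix (Fin N) (Fin N) ℝ)
    (hA : ∀ i, A i ∈ S) :
    sInf (specRad '' S) ^ n ≤ specRad ((List.ofFn A).reverse.prod) :=
  stmt_8_general S hS hcomp hpos n hn A hA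
end

section
/- If 𝒜, ℬ ⊂ M(N,M) are H-sets of positive matrices, then the Minkowski sum 𝒜 + ℬ = {A + B : A ∈ 𝒜, B ∈ ℬ} is also an H-set of positive matrices. -/
open Matrix

/-- An H-set (hourglass set): a set of strictly positive matrices such that
whenever `Ãu = v` with `Ã ∈ S` and `u, v > 0`, both hourglass conditions
H1 and H2 hold. -/
def IsHSet {N M : ℕ} (S : Set (Matrix (Fin N) (Fin M) ℝ)) : Prop :=
  (∀ A ∈ S, ∀ i j, 0 < A i j) ∧
  ∀ (u : Fin M → ℝ) (v : Fin N → ℝ), (∀ j, 0 < u j) → (∀ i, 0 < v i) →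
    (∃ A ∈ S, A.mulVec u = v) →
    ((∀ A ∈ S, v ≤ A.mulVec u) ∨ ∃ B ∈ S, B.mulVec u ≤ v ∧ B.mulVec u ≠ v) ∧
    ((∀ A ∈ S, A.mulVec u ≤ v) ∨ ∃ B ∈ S, v ≤ B.mulVec u ∧ B.mulVec u ≠ v)

/-!
For a fixed positive vector `u`, both hourglass conditions only concern the image set
`{A *ᵥ u | A ∈ 𝒜}` around the point `v`: either `v` is a lower (upper) bound of it, or the set
contains a point strictly below (above) `v`. The image of `𝒜 + ℬ` is the Minkowski sum of the
images, and `v = A₀ *ᵥ u + B₀ *ᵥ u` with `A₀ ∈ 𝒜`, `B₀ ∈ ℬ`. If both `A₀ *ᵥ u` and `B₀ *ᵥ u`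
are bounds, so is their sum; otherwise a strictly smaller point on one side plus the point on
the other side is strictly smaller than `v`.
-/

open Pointwise

section Hourglass

variable {α : Type*}

def HourglassBelow [Preorder α] (X : Set α) (x : α) : Prop :=
  (∀ y ∈ X, x ≤ y) ∨ ∃ y ∈ X, y < x

def HourglassAbove [Preorder α] (X : Set α) (x : α) : Prop :=
  (∀ y ∈ X, y ≤ x) ∨ ∃ y ∈ X, x < y

variable [AddCommMonoid α] [PartialOrder α] [IsOrderedCancelAddMonoid α]
  {X Y : Set α} {x y : α}

theorem HourglassBelow.add (hX : HourglassBelow X x) (hY : HourglassBelow Y y) (hx : x ∈ X)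
    (hy : y ∈ Y) : HourglassBelow (X + Y) (x + y) := by
  rcases hX with hX | ⟨x', hx', hlt⟩
  · rcases hY with hY | ⟨y', hy', hlt⟩
    · left
      rintro _ ⟨x', hx', y', hy', rfl⟩
      exact add_le_add (hX x' hx') (hY y' hy')
    · exact Or.inr ⟨x + y', Set.add_mem_add hx hy', add_lt_add_right hlt x⟩
  · exact Or.inr ⟨x' + y, Set.add_mem_add hx' hy, add_lt_add_left hlt y⟩

theorem HourglassAbove.add (hX : HourglassAbove X x) (hY : HourglassAbove Y y) (hx : x ∈ X)
    (hy : y ∈ Y) : HourglassAbove (X + Y) (x + y) :=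
  HourglassBelow.add (α := αᵒᵈ) hX hY hx hy

end Hourglass

section PositiveMatrix

variable {m n R : Type*} [Fintype n]

theorem Matrix.nonempty_of_mulVec_apply_ne_zero [NonUnitalNonAssocSemiring R]
    {A : Matrix m n R} {u : n → R} {i : m} (h : (A *ᵥ u) i ≠ 0) : Nonempty n :=
  let ⟨j, _, _⟩ := Finset.exists_ne_zero_of_sum_ne_zero h
  ⟨j⟩

theorem Matrix.mulVec_pos [Nonempty n] [Semiring R] [PartialOrder R] [IsStrictOrderedRing R]
    {A : Matrix m n R} {u : n → R} (hA : ∀ i j, 0 < A i j) (hu : ∀ j, 0 < u j) (i : m) :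
    0 < (A *ᵥ u) i :=
  Finset.sum_pos (fun j _ => mul_pos (hA i j) (hu j)) Finset.univ_nonempty

theorem Matrix.image_mulVec_add [NonUnitalNonAssocSemiring R] (S T : Set (Matrix m n R))
    (u : n → R) : (· *ᵥ u) '' (S + T) = (· *ᵥ u) '' S + (· *ᵥ u) '' T :=
  Set.image_add (mulVec.addMonoidHomLeft u)

end PositiveMatrix

theorem isHSet_iff {N M : ℕ} (S : Set (Matrix (Fin N) (Fin M) ℝ)) :
    IsHSet S ↔ (∀ A ∈ S, ∀ i j, 0 < A i j) ∧
      ∀ (u : Fin M → ℝ) (v : Fin N → ℝ), (∀ j, 0 < u j) → (∀ i, 0 < v i) →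
        v ∈ (· *ᵥ u) '' S →
        HourglassBelow ((· *ᵥ u) '' S) v ∧ HourglassAbove ((· *ᵥ u) '' S) v := by
  simp only [HourglassBelow, HourglassAbove, Set.exists_mem_image, Set.forall_mem_image]
  simp only [IsHSet, Set.mem_image, lt_iff_le_and_ne (α := Fin N → ℝ), ne_comm (α := Fin N → ℝ)]

theorem stmt_10 {N M : ℕ} (S T : Set (Matrix (Fin N) (Fin M) ℝ))
    (hS : IsHSet S) (hT : IsHSet T) :
    IsHSet {C | ∃ A ∈ S, ∃ B ∈ T, C = A + B} := by
  have hST : {C | ∃ A ∈ S, ∃ B ∈ T, C = A + B} = S + T := by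
    ext C
    simp only [Set.mem_ofPred_eq, Set.mem_add, eq_comm]
  rw [isHSet_iff] at hS hT ⊢
  rw [hST]
  refine ⟨?_, fun u v hu hv hvST => ?_⟩
  · rintro _ ⟨A, hA, B, hB, rfl⟩ i j
    exact add_pos (hS.1 A hA i j) (hT.1 B hB i j)
  have hM : ∀ i : Fin N, Nonempty (Fin M) := fun i => by
    obtain ⟨C, -, rfl⟩ := hvST
    exact nonempty_of_mulVec_apply_ne_zero (hv i).ne'
  rw [image_mulVec_add] at hvST ⊢
  obtain ⟨_, ⟨A, hA, rfl⟩, _, ⟨B, hB, rfl⟩, rfl⟩ := hvST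
  have hAu : ∀ i, 0 < (A *ᵥ u) i := fun i => have := hM i; mulVec_pos (hS.1 A hA) hu i
  have hBu : ∀ i, 0 < (B *ᵥ u) i := fun i => have := hM i; mulVec_pos (hT.1 B hB) hu i
  have hAX := Set.mem_image_of_mem (· *ᵥ u) hA
  have hBY := Set.mem_image_of_mem (· *ᵥ u) hB
  obtain ⟨hS₁, hS₂⟩ := hS.2 u _ hu hAu hAX
  obtain ⟨hT₁, hT₂⟩ := hT.2 u _ hu hBu hBY
  exact ⟨hS₁.add hT₁ hAX hBY, hS₂.add hT₂ hAX hBY⟩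
end
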